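/- arXiv:1310.2346 — 2 statements merged into one kernel-verified Lean document; each statement's English description precedes it below -/
import Mathlib

section
/- A real-valued logic L satisfies P2 if and only if it satisfies P2', if and only if it satisfies P2''. -/
open Set

noncomputable section

/-- The real unit interval `[0,1]` as a subset of `ℝ`. -/
def I01 : Set ℝ := Set.Icc 0 1

/-- A continuous t-norm on `[0,1]`. -/
structure ContTNorm where
  mul : ℝ → ℝ → ℝ
  maps_to : ∀ x ∈ I01, ∀ y ∈ I01, mul x y ∈ I01
  continuousOn : ContinuousOn (fun p : ℝ × ℝ => mul p.1 p.2) (I01 ×ˢ I01)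
  assoc : ∀ x ∈ I01, ∀ y ∈ I01, ∀ z ∈ I01, mul (mul x y) z = mul x (mul y z)
  comm : ∀ x ∈ I01, ∀ y ∈ I01, mul x y = mul y x
  mono : ∀ a ∈ I01, ∀ b ∈ I01, ∀ c ∈ I01, b ≤ c → mul a b ≤ mul a c
  one_mul' : ∀ x ∈ I01, mul 1 x = x

/-- The residuum of a t-norm: `x →* y := sup { c ∈ [0,1] | x * c ≤ y }`. -/
def resid (t : ContTNorm) (x y : ℝ) : ℝ :=
  sSup {c | c ∈ I01 ∧ t.mul x c ≤ y}

/-- An algebra of truth values for the t-norm `t`: a subset of `[0,1]` containing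
`0` and `1` and closed under `t.mul` and its residuum. -/
structure TruthAlg (t : ContTNorm) where
  carrier : Set ℝ
  subset : carrier ⊆ I01
  zero_mem : (0:ℝ) ∈ carrier
  one_mem : (1:ℝ) ∈ carrier
  mul_mem : ∀ x ∈ carrier, ∀ y ∈ carrier, t.mul x y ∈ carrier
  resid_mem : ∀ x ∈ carrier, ∀ y ∈ carrier, resid t x y ∈ carrier

/-- Propositional formulas over countably many variables with `&`, `→`, `⊥`. -/
inductive Formula : Type
  | var : ℕ → Formula
  | bot : Formula
  | conj : Formula → Formula → Formula
  | impl : Formula → Formula → Formula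

/-- `α ↔ β := (α → β) & (β → α)`. -/
def Formula.iff (a b : Formula) : Formula := .conj (.impl a b) (.impl b a)

/-- The valuation determined by an assignment `v` of reals to the variables. -/
def eval (t : ContTNorm) (v : ℕ → ℝ) : Formula → ℝ
  | .var i => v i
  | .bot => 0
  | .conj a b => t.mul (eval t v a) (eval t v b)
  | .impl a b => resid t (eval t v a) (eval t v b)

/-- A valuation into `(T, t)` is (identified with) an assignment of values of `T`
to the propositional variables. -/
def IsValuation (t : ContTNorm) (T : TruthAlg t) (v : ℕ → ℝ) : Prop :=
  ∀ i, v i ∈ T.carrier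

/-- The logic induced by `(T, t)`: all formulas true to degree 1 under every valuation. -/
def Taut (t : ContTNorm) (T : TruthAlg t) : Set Formula :=
  {α | ∀ v : ℕ → ℝ, IsValuation t T v → eval t v α = 1}

/-- Principle P1. -/
def P1 (L : Set Formula) : Prop :=
  ∀ (t : ContTNorm) (T : TruthAlg t), Taut t T = L →
    ∀ α β : Formula,
      (Formula.iff α β ∈ L ↔
        ∀ v : ℕ → ℝ, IsValuation t T v → (eval t v α = 1 ↔ eval t v β = 1))

/-- Principle P2. -/
def P2 (L : Set Formula) : Prop :=
  ∀ (t : ContTNorm) (T : TruthAlg t), Taut t T = L →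
    ∀ v w : ℕ → ℝ, IsValuation t T v → IsValuation t T w → v ≠ w →
      ∃ α : Formula, 0 < eval t v α ∧ eval t w α = 0

/-- The Gödel t-norm: minimum. -/
def minT : ContTNorm where
  mul := fun x y => min x y
  maps_to := by
    rintro x ⟨hx0, hx1⟩ y ⟨hy0, hy1⟩
    exact ⟨le_min hx0 hy0, min_le_of_left_le hx1⟩
  continuousOn := (continuous_fst.min continuous_snd).continuousOn
  assoc := fun x _ y _ z _ => min_assoc x y z
  comm := fun x _ y _ => min_comm x y
  mono := fun a _ b _ c _ h => min_le_min le_rfl h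
  one_mul' := by rintro x ⟨hx0, hx1⟩; exact min_eq_right hx1

/-- The Łukasiewicz t-norm: `x ⊙ y = max 0 (x + y - 1)`. -/
def lukT : ContTNorm where
  mul := fun x y => max 0 (x + y - 1)
  maps_to := by
    rintro x ⟨hx0, hx1⟩ y ⟨hy0, hy1⟩
    exact ⟨le_max_left _ _, max_le zero_le_one (by linarith)⟩
  continuousOn :=
    (continuous_const.max ((continuous_fst.add continuous_snd).sub continuous_const)).continuousOn
  assoc := by
    rintro x ⟨hx0, hx1⟩ y ⟨hy0, hy1⟩ z ⟨hz0, hz1⟩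
    simp only [max_def]
    split_ifs <;> linarith
  comm := by intro x _ y _; rw [add_comm]
  mono := by
    rintro a _ b _ c _ h
    exact max_le_max le_rfl (by linarith)
  one_mul' := by
    rintro x ⟨hx0, hx1⟩
    try dsimp only
    rw [show (1:ℝ) + x - 1 = x by ring, max_eq_right hx0]

/-- The product t-norm: ordinary multiplication. -/
def prodT : ContTNorm where
  mul := fun x y => x * y
  maps_to := by
    rintro x ⟨hx0, hx1⟩ y ⟨hy0, hy1⟩
    exact ⟨mul_nonneg hx0 hy0, by nlinarith⟩
  continuousOn := (continuous_fst.mul continuous_snd).continuousOn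
  assoc := fun x _ y _ z _ => mul_assoc x y z
  comm := fun x _ y _ => mul_comm x y
  mono := by rintro a ⟨ha0, _⟩ b _ c _ h; exact mul_le_mul_of_nonneg_left h ha0
  one_mul' := fun x _ => one_mul x

lemma ContTNorm.mul_zero' (t : ContTNorm) {x : ℝ} (hx : x ∈ I01) : t.mul x 0 = 0 := by
  have h01 : (0:ℝ) ∈ I01 := ⟨le_rfl, zero_le_one⟩
  have h11 : (1:ℝ) ∈ I01 := ⟨zero_le_one, le_rfl⟩
  have h1 : t.mul x 0 = t.mul 0 x := t.comm x hx 0 h01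
  have h2 : t.mul 0 x ≤ t.mul 0 1 := t.mono 0 h01 x hx 1 h11 hx.2
  have h3 : t.mul 0 1 = t.mul 1 0 := t.comm 0 h01 1 h11
  have h4 : t.mul 1 0 = 0 := t.one_mul' 0 h01
  have h5 : t.mul x 0 ∈ I01 := t.maps_to x hx 0 h01
  rw [h3, h4] at h2
  rw [h1] at h5 ⊢
  exact le_antisymm h2 h5.1

lemma resid_mem_I01 (t : ContTNorm) {x y : ℝ} (hx : x ∈ I01) (hy : y ∈ I01) :
    resid t x y ∈ I01 := by
  have h01 : (0:ℝ) ∈ I01 := ⟨le_rfl, zero_le_one⟩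
  have h0 : (0:ℝ) ∈ {c | c ∈ I01 ∧ t.mul x c ≤ y} :=
    ⟨h01, by rw [t.mul_zero' hx]; exact hy.1⟩
  have hbdd : BddAbove {c | c ∈ I01 ∧ t.mul x c ≤ y} := ⟨1, fun c hc => hc.1.2⟩
  constructor
  · exact le_csSup hbdd h0
  · exact csSup_le ⟨0, h0⟩ fun c hc => hc.1.2

/-- The full algebra of truth values `[0,1]` for a t-norm `t`. -/
def fullAlg (t : ContTNorm) : TruthAlg t where
  carrier := I01
  subset := le_rfl
  zero_mem := ⟨le_rfl, zero_le_one⟩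
  one_mem := ⟨zero_le_one, le_rfl⟩
  mul_mem := t.maps_to
  resid_mem := fun _ hx _ hy => resid_mem_I01 t hx hy

lemma resid_eq_one_of_le (t : ContTNorm) {x y : ℝ} (hx : x ∈ I01) (hy : y ∈ I01)
    (hxy : x ≤ y) : resid t x y = 1 := by
  have h11 : (1:ℝ) ∈ I01 := ⟨zero_le_one, le_rfl⟩
  have hmul : t.mul x 1 = x := by rw [t.comm x hx 1 h11]; exact t.one_mul' x hx
  have h1 : (1:ℝ) ∈ {c | c ∈ I01 ∧ t.mul x c ≤ y} := ⟨h11, by rw [hmul]; exact hxy⟩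
  have hbdd : BddAbove {c | c ∈ I01 ∧ t.mul x c ≤ y} := ⟨1, fun c hc => hc.1.2⟩
  exact le_antisymm (csSup_le ⟨1, h1⟩ fun c hc => hc.1.2) (le_csSup hbdd h1)

lemma resid_one_zero (t : ContTNorm) : resid t 1 0 = 0 := by
  have : {c | c ∈ I01 ∧ t.mul 1 c ≤ 0} = {0} := by
    ext c
    constructor
    · rintro ⟨hc, hle⟩
      have := t.one_mul' c hc
      have := hc.1
      simp only [Set.mem_singleton_iff]
      linarith [this, (t.one_mul' c hc) ▸ hle]
    · rintro rfl
      exact ⟨⟨le_rfl, zero_le_one⟩, by rw [t.mul_zero' ⟨zero_le_one, le_rfl⟩]⟩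
  rw [resid, this, csSup_singleton]

/-- The two-element algebra of truth values `{0,1}`. -/
def boolAlg (t : ContTNorm) : TruthAlg t where
  carrier := {0, 1}
  subset := by
    rintro x (rfl | rfl)
    · exact ⟨le_rfl, zero_le_one⟩
    · exact ⟨zero_le_one, le_rfl⟩
  zero_mem := Or.inl rfl
  one_mem := Or.inr rfl
  mul_mem := by
    have h01 : (0:ℝ) ∈ I01 := ⟨le_rfl, zero_le_one⟩
    have h11 : (1:ℝ) ∈ I01 := ⟨zero_le_one, le_rfl⟩
    rintro x (rfl | rfl) y (rfl | rfl)
    · exact Or.inl (t.mul_zero' h01)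
    · exact Or.inl (by rw [t.comm 0 h01 1 h11]; exact t.mul_zero' h11)
    · exact Or.inl (t.mul_zero' h11)
    · exact Or.inr (t.one_mul' 1 h11)
  resid_mem := by
    have h01 : (0:ℝ) ∈ I01 := ⟨le_rfl, zero_le_one⟩
    have h11 : (1:ℝ) ∈ I01 := ⟨zero_le_one, le_rfl⟩
    rintro x (rfl | rfl) y (rfl | rfl)
    · exact Or.inr (resid_eq_one_of_le t h01 h01 le_rfl)
    · exact Or.inr (resid_eq_one_of_le t h01 h11 zero_le_one)
    · exact Or.inl (resid_one_zero t)
    · exact Or.inr (resid_eq_one_of_le t h11 h11 le_rfl)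

/-- Classical logic: the logic induced by the two-element algebra `{0,1}`
(this is independent of the chosen continuous t-norm). -/
def ClassicalLogic : Set Formula := Taut minT (boolAlg minT)


/-- Principle P2'. -/
def P2' (L : Set Formula) : Prop :=
  ∀ (t : ContTNorm) (T : TruthAlg t), Taut t T = L →
    ∀ v w : ℕ → ℝ, IsValuation t T v → IsValuation t T w → v ≠ w →
      ∃ α : Formula, eval t v α < 1 ∧ eval t w α = 1

/-- Principle P2''. -/
def P2'' (L : Set Formula) : Prop :=
  ∀ (t : ContTNorm) (T : TruthAlg t), Taut t T = L →
    ∀ v w : ℕ → ℝ, IsValuation t T v → IsValuation t T w → v ≠ w →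
      ∃ α : Formula, eval t v α = 0 ∧ eval t w α = 1

/-!
Negation `¬α := α → ⊥` takes the value `1` exactly at `0`, because the residuum is attained:
`x * (x →* 0) ≤ 0`. Hence P2 gives P2' by negating the separating formula, and P2'' gives P2 by
exchanging `v` and `w`. For P2' ⇒ P2'', let `α` have value `a < 1` under `v` and `1` under `w`.
Separating the constant valuations `1` and `a` yields `β` with `β(1̄) < 1` and `β(ā) = 1`;
under the constant valuation `1` every formula is Boolean, so `β(1̄) = 0`. Substituting `α`
for all variables of `β` and negating gives value `0` under `v` and `1` under `w`.
-/

lemma ContTNorm.mul_one (t : ContTNorm) {x : ℝ} (hx : x ∈ I01) : t.mul x 1 = x := by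
  rw [t.comm x hx 1 ⟨zero_le_one, le_rfl⟩, t.one_mul' x hx]

lemma mul_resid_le (t : ContTNorm) {x y : ℝ} (hx : x ∈ I01) (hy : y ∈ I01) :
    t.mul x (resid t x y) ≤ y := by
  have hcont : ContinuousOn (t.mul x) I01 :=
    t.continuousOn.comp (continuous_const.prodMk continuous_id).continuousOn
      fun c hc => Set.mk_mem_prod hx hc
  have hclosed : IsClosed {c | c ∈ I01 ∧ t.mul x c ≤ y} :=
    hcont.preimage_isClosed_of_isClosed isClosed_Icc isClosed_Iic
  have hzero : (0:ℝ) ∈ {c | c ∈ I01 ∧ t.mul x c ≤ y} :=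
    ⟨⟨le_rfl, zero_le_one⟩, by rw [t.mul_zero' hx]; exact hy.1⟩
  exact (hclosed.csSup_mem ⟨0, hzero⟩ ⟨1, fun c hc => hc.1.2⟩).2

lemma resid_eq_one_iff (t : ContTNorm) {x y : ℝ} (hx : x ∈ I01) (hy : y ∈ I01) :
    resid t x y = 1 ↔ x ≤ y := by
  refine ⟨fun h => ?_, resid_eq_one_of_le t hx hy⟩
  simpa [h, t.mul_one hx] using mul_resid_le t hx hy

lemma resid_zero_lt_one (t : ContTNorm) {x : ℝ} (hx : x ∈ I01) (hpos : 0 < x) :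
    resid t x 0 < 1 := by
  refine lt_of_le_of_ne (resid_mem_I01 t hx ⟨le_rfl, zero_le_one⟩).2 fun h => ?_
  exact hpos.not_ge ((resid_eq_one_iff t hx ⟨le_rfl, zero_le_one⟩).1 h)

lemma resid_zero_zero (t : ContTNorm) : resid t 0 0 = 1 :=
  resid_eq_one_of_le t ⟨le_rfl, zero_le_one⟩ ⟨le_rfl, zero_le_one⟩ le_rfl

namespace Formula

def neg (a : Formula) : Formula := .impl a .bot

def subst (σ : ℕ → Formula) : Formula → Formula
  | .var i => σ i
  | .bot => .bot
  | .conj a b => .conj (subst σ a) (subst σ b)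
  | .impl a b => .impl (subst σ a) (subst σ b)

end Formula

lemma eval_neg (t : ContTNorm) (v : ℕ → ℝ) (a : Formula) :
    eval t v a.neg = resid t (eval t v a) 0 :=
  rfl

lemma eval_subst (t : ContTNorm) (v : ℕ → ℝ) (σ : ℕ → Formula) :
    ∀ β : Formula, eval t v (β.subst σ) = eval t (fun i => eval t v (σ i)) β
  | .var _ => rfl
  | .bot => rfl
  | .conj a b => by simp only [Formula.subst, eval, eval_subst t v σ a, eval_subst t v σ b]
  | .impl a b => by simp only [Formula.subst, eval, eval_subst t v σ a, eval_subst t v σ b]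

lemma eval_mem (t : ContTNorm) (T : TruthAlg t) {v : ℕ → ℝ} (hv : IsValuation t T v) :
    ∀ β : Formula, eval t v β ∈ T.carrier
  | .var i => hv i
  | .bot => T.zero_mem
  | .conj a b => T.mul_mem _ (eval_mem t T hv a) _ (eval_mem t T hv b)
  | .impl a b => T.resid_mem _ (eval_mem t T hv a) _ (eval_mem t T hv b)

lemma eval_const_one_eq_zero_of_lt_one (t : ContTNorm) {β : Formula}
    (hβ : eval t (fun _ => 1) β < 1) : eval t (fun _ => 1) β = 0 := by
  have hbool : eval t (fun _ => 1) β ∈ ({0, 1} : Set ℝ) :=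
    eval_mem t (boolAlg t) (fun _ => Or.inr rfl) β
  rcases hbool with h | h
  · exact h
  · exact absurd h hβ.ne

lemma P2'_of_P2 {L : Set Formula} (h : P2 L) : P2' L := by
  intro t T hT v w hv hw hvw
  obtain ⟨α, hv_pos, hw_zero⟩ := h t T hT v w hv hw hvw
  refine ⟨α.neg, ?_, ?_⟩
  · exact resid_zero_lt_one t (T.subset (eval_mem t T hv α)) hv_pos
  · rw [eval_neg, hw_zero, resid_zero_zero]

lemma P2''_of_P2' {L : Set Formula} (h : P2' L) : P2'' L := by
  intro t T hT v w hv hw hvw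
  obtain ⟨α, hv_lt, hw_one⟩ := h t T hT v w hv hw hvw
  set a := eval t v α
  have hne : (fun _ : ℕ => (1:ℝ)) ≠ fun _ => a := fun heq => hv_lt.ne (congrFun heq 0).symm
  obtain ⟨β, hβ_one, hβ_a⟩ :=
    h t T hT _ _ (fun _ => T.one_mem) (fun _ => eval_mem t T hv α) hne
  have hβ_one_zero := eval_const_one_eq_zero_of_lt_one t hβ_one
  refine ⟨(β.subst fun _ => α).neg, ?_, ?_⟩
  · rw [eval_neg, eval_subst, hβ_a, resid_one_zero]
  · rw [eval_neg, eval_subst, hw_one, hβ_one_zero, resid_zero_zero]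

lemma P2_of_P2'' {L : Set Formula} (h : P2'' L) : P2 L := by
  intro t T hT v w hv hw hvw
  obtain ⟨α, hw_zero, hv_one⟩ := h t T hT w v hw hv hvw.symm
  exact ⟨α, hv_one ▸ zero_lt_one, hw_zero⟩

theorem P2_iff_P2'_iff_P2''_general (L : Set Formula) :
    (P2 L ↔ P2' L) ∧ (P2' L ↔ P2'' L) :=
  ⟨⟨P2'_of_P2, fun h => P2_of_P2'' (P2''_of_P2' h)⟩,
    ⟨P2''_of_P2', fun h => P2'_of_P2 (P2_of_P2'' h)⟩⟩

/-- A real-valued logic satisfies P2 iff it satisfies P2', iff it satisfies P2''. -/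
theorem P2_iff_P2'_iff_P2'' (L : Set Formula)
    (hL : ∃ (t : ContTNorm) (T : TruthAlg t), Taut t T = L) :
    (P2 L ↔ P2' L) ∧ (P2' L ↔ P2'' L) :=
  P2_iff_P2'_iff_P2''_general L
end
end

section
/- Product logic fails P2 over its standard algebra: there exist two distinct valuations μ ≠ ν into ([0,1],·) such that no formula α satisfies μ(α) > 0 and ν(α) = 0. -/
open Set

noncomputable section

/-! Squaring is an automorphism of `([0,1], ·, →_·)` fixing `0`, so the valuations sending every
variable to `1/2` and to `1/4 = (1/2)²` vanish on exactly the same formulas. -/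

lemma eval_mem_I01 (t : ContTNorm) {v : ℕ → ℝ} (hv : ∀ i, v i ∈ I01) (α : Formula) :
    eval t v α ∈ I01 := by
  induction α with
  | var i => exact hv i
  | bot => exact ⟨le_rfl, zero_le_one⟩
  | conj a b ha hb => exact t.maps_to _ ha _ hb
  | impl a b ha hb => exact resid_mem_I01 t ha hb

lemma eval_comp (t : ContTNorm) {f : ℝ → ℝ} (hf0 : f 0 = 0)
    (hf_mul : ∀ x ∈ I01, ∀ y ∈ I01, f (t.mul x y) = t.mul (f x) (f y))
    (hf_resid : ∀ x ∈ I01, ∀ y ∈ I01, f (resid t x y) = resid t (f x) (f y))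
    {v : ℕ → ℝ} (hv : ∀ i, v i ∈ I01) (α : Formula) :
    eval t (f ∘ v) α = f (eval t v α) := by
  induction α with
  | var i => rfl
  | bot => exact hf0.symm
  | conj a b ha hb =>
    simp only [eval, ha, hb, hf_mul _ (eval_mem_I01 t hv a) _ (eval_mem_I01 t hv b)]
  | impl a b ha hb =>
    simp only [eval, ha, hb, hf_resid _ (eval_mem_I01 t hv a) _ (eval_mem_I01 t hv b)]

lemma resid_prodT_of_lt {x y : ℝ} (hy : 0 ≤ y) (hyx : y < x) : resid prodT x y = y / x := by
  have hx : 0 < x := hy.trans_lt hyx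
  have hset : {c | c ∈ I01 ∧ prodT.mul x c ≤ y} = Icc 0 (y / x) := by
    ext c
    simp only [prodT, I01, mem_Icc, mem_ofPred_eq, le_div_iff₀ hx, mul_comm c x]
    have hquot_le_one : y / x ≤ 1 := (div_le_one hx).mpr hyx.le
    constructor
    · rintro ⟨⟨hc0, -⟩, hle⟩
      exact ⟨hc0, hle⟩
    · rintro ⟨hc0, hle⟩
      exact ⟨⟨hc0, by nlinarith⟩, hle⟩
  rw [resid, hset, csSup_Icc (div_nonneg hy hx.le)]

lemma resid_prodT_pow {x y : ℝ} (hx : x ∈ I01) (hy : y ∈ I01) {n : ℕ} (hn : n ≠ 0) :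
    resid prodT (x ^ n) (y ^ n) = resid prodT x y ^ n := by
  have hpow_mem : ∀ z ∈ I01, z ^ n ∈ I01 := fun z hz => ⟨pow_nonneg hz.1 n, pow_le_one₀ hz.1 hz.2⟩
  rcases le_or_gt x y with hxy | hyx
  · rw [resid_eq_one_of_le prodT hx hy hxy, one_pow,
      resid_eq_one_of_le prodT (hpow_mem x hx) (hpow_mem y hy) (pow_le_pow_left₀ hx.1 hxy n)]
  · rw [resid_prodT_of_lt hy.1 hyx, resid_prodT_of_lt (pow_nonneg hy.1 n)
      (pow_lt_pow_left₀ hyx hy.1 hn), div_pow]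

lemma eval_prodT_pow {v : ℕ → ℝ} (hv : ∀ i, v i ∈ I01) {n : ℕ} (hn : n ≠ 0) (α : Formula) :
    eval prodT (fun i => v i ^ n) α = eval prodT v α ^ n :=
  eval_comp prodT (f := (· ^ n)) (zero_pow hn) (fun x _ y _ => mul_pow x y n)
    (fun _ hx _ hy => (resid_prodT_pow hx hy hn).symm) hv α

/-- Product logic fails P2 over its standard algebra: there are two distinct
valuations into `([0,1], ·)` that no formula separates. -/
theorem product_fails_P2 :
    ∃ v w : ℕ → ℝ, IsValuation prodT (fullAlg prodT) v ∧
      IsValuation prodT (fullAlg prodT) w ∧ v ≠ w ∧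
      ∀ α : Formula, ¬ (0 < eval prodT v α ∧ eval prodT w α = 0) := by
  have half_mem : ∀ _ : ℕ, (1 / 2 : ℝ) ∈ I01 := fun _ => ⟨by norm_num, by norm_num⟩
  refine ⟨fun _ => 1 / 2, fun _ => (1 / 2) ^ 2, half_mem, fun _ => ⟨by norm_num, by norm_num⟩,
    fun h => by norm_num [funext_iff] at h, ?_⟩
  rintro α ⟨hpos, hzero⟩
  rw [eval_prodT_pow half_mem two_ne_zero, pow_eq_zero_iff two_ne_zero] at hzero
  exact hpos.ne' hzero

end
end
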